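/- Suppose in addition that 1/(1+ε) ≤ π_b(a|s)/π_b(a|s,u) ≤ 1+ε for all s, a, u, where ε > 0 (i.e. the sensitivity bounds hold with α(s,a) = 1/(1+ε) and β(s,a) = 1+ε). Then the infinite-data FQE point estimate satisfies, for every state s: (1 + εH − (1+ε)^H)/ε ≤ V_1(s) − Σ_a π_e(a|s) f̂_1(s,a) ≤ ((1+ε)^{−H} − (1 − εH))/ε. -/

import Mathlib

open Finset

noncomputable section

variable {S U A : Type*}

/-- Marginalized (observed) behavior policy `π_b(a|s) = Σ_u P(u|s) π_b(a|s,u)`. -/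
def piMarg [Fintype U] (Pu : S → U → ℝ) (pib : S → U → A → ℝ) (s : S) (a : A) : ℝ :=
  ∑ u, Pu s u * pib s u a

/-- Marginalized transition kernel `P(s'|s,a) = Σ_u P(u|s) T(s'|s,u,a)`. -/
def margKer [Fintype U] (Pu : S → U → ℝ) (T : S → U → A → S → ℝ)
    (s : S) (a : A) (s' : S) : ℝ :=
  ∑ u, Pu s u * T s u a s'

/-- Confounded observed kernel `P^b(s'|s,a) = Σ_u P(u|s)·(π_b(a|s,u)/π_b(a|s))·T(s'|s,u,a)`. -/
def confKer [Fintype U] (Pu : S → U → ℝ) (pib : S → U → A → ℝ) (T : S → U → A → S → ℝ)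
    (s : S) (a : A) (s' : S) : ℝ :=
  ∑ u, Pu s u * (pib s u a / piMarg Pu pib s a) * T s u a s'

/-- Bellman value of the evaluation policy under kernel `P`, indexed by the number of
remaining steps: `Vaux P r πe k = V_{H+1-k}` (so `Vaux _ _ _ 0 = V_{H+1} = 0`). -/
def Vaux [Fintype S] [Fintype A] (P : S → A → S → ℝ) (r : S → A → ℝ) (pie : S → A → ℝ) :
    ℕ → S → ℝ
  | 0 => fun _ => 0
  | (k + 1) => fun s => ∑ a, pie s a * (r s a + ∑ s', P s a s' * Vaux P r pie k s')

/-- Bellman Q-value with `k` remaining steps *after* the current one: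
`Qaux P r πe k = Q_{H-k}`, i.e. `Q_h(s,a) = r(s,a) + Σ_{s'} P(s'|s,a) V_{h+1}(s')`. -/
def Qaux [Fintype S] [Fintype A] (P : S → A → S → ℝ) (r : S → A → ℝ) (pie : S → A → ℝ)
    (k : ℕ) (s : S) (a : A) : ℝ :=
  r s a + ∑ s', P s a s' * Vaux P r pie k s'

/-- Infinite-data FQE iterates indexed by remaining steps: `fqeAux Pb r πe k = f̂_{H+1-k}`,
so `f̂_{H+1} = 0` and `f̂_h(s,a) = r(s,a) + Σ_{s'} P^b(s'|s,a) Σ_{a'} π_e(a'|s') f̂_{h+1}(s',a')`. -/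
def fqeAux [Fintype S] [Fintype A] (Pb : S → A → S → ℝ) (r : S → A → ℝ) (pie : S → A → ℝ) :
    ℕ → S → A → ℝ
  | 0 => fun _ _ => 0
  | (k + 1) => fun s a => r s a + ∑ s', Pb s a s' * ∑ a', pie s' a' * fqeAux Pb r pie k s' a'

/-!
Both value functions are computed by the same backward recursion, once with the marginal
kernel `P` and once with the confounded kernel `P^b`. The sensitivity model sandwiches
`(1+ε)⁻¹ P ≤ P^b ≤ (1+ε) P` entrywise, so with values in `[0, k]` after `k` remaining steps,
one Bellman step maps an error interval `[L, B]` into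
`[(1+ε) L - ε k, (1+ε)⁻¹ B + (1 - (1+ε)⁻¹) k]`. The stated bounds solve (for the upper one,
dominate) these linear recursions.
-/

section WeightedSums

variable {ι : Type*} [Fintype ι] {p q v w : ι → ℝ}

lemma sum_mul_le_of_forall_le {x : ι → ℝ} {c : ℝ} (hp0 : ∀ i, 0 ≤ p i)
    (hp1 : ∑ i, p i = 1) (hx : ∀ i, x i ≤ c) : ∑ i, p i * x i ≤ c :=
  calc ∑ i, p i * x i ≤ ∑ i, p i * c :=
        sum_le_sum fun i _ => mul_le_mul_of_nonneg_left (hx i) (hp0 i)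
    _ = c := by rw [← sum_mul, hp1, one_mul]

lemma le_sum_mul_of_forall_le {x : ι → ℝ} {c : ℝ} (hp0 : ∀ i, 0 ≤ p i)
    (hp1 : ∑ i, p i = 1) (hx : ∀ i, c ≤ x i) : c ≤ ∑ i, p i * x i :=
  calc c = ∑ i, p i * c := by rw [← sum_mul, hp1, one_mul]
    _ ≤ ∑ i, p i * x i := sum_le_sum fun i _ => mul_le_mul_of_nonneg_left (hx i) (hp0 i)

lemma sum_mul_sub_sum_mul_le {α B c : ℝ} (hα0 : 0 ≤ α) (hα1 : α ≤ 1)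
    (hp0 : ∀ i, 0 ≤ p i) (hp1 : ∑ i, p i = 1) (hq : ∀ i, α * p i ≤ q i)
    (hw : ∀ i, 0 ≤ w i) (hv : ∀ i, v i ≤ c) (hB : ∀ i, v i - w i ≤ B) :
    ∑ i, p i * v i - ∑ i, q i * w i ≤ α * B + (1 - α) * c :=
  calc ∑ i, p i * v i - ∑ i, q i * w i ≤ ∑ i, p i * v i - ∑ i, α * p i * w i :=
        sub_le_sub_left (sum_le_sum fun i _ => mul_le_mul_of_nonneg_right (hq i) (hw i)) _
    _ = ∑ i, p i * (α * (v i - w i) + (1 - α) * v i) := by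
        rw [← sum_sub_distrib]
        exact sum_congr rfl fun i _ => by ring
    _ ≤ α * B + (1 - α) * c := sum_mul_le_of_forall_le hp0 hp1 fun i =>
        add_le_add (mul_le_mul_of_nonneg_left (hB i) hα0)
          (mul_le_mul_of_nonneg_left (hv i) (sub_nonneg.2 hα1))

lemma le_sum_mul_sub_sum_mul {β L c : ℝ} (hβ : 1 ≤ β)
    (hp0 : ∀ i, 0 ≤ p i) (hp1 : ∑ i, p i = 1) (hq : ∀ i, q i ≤ β * p i)
    (hw : ∀ i, 0 ≤ w i) (hv : ∀ i, v i ≤ c) (hL : ∀ i, L ≤ v i - w i) :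
    β * L + (1 - β) * c ≤ ∑ i, p i * v i - ∑ i, q i * w i :=
  calc β * L + (1 - β) * c ≤ ∑ i, p i * (β * (v i - w i) + (1 - β) * v i) :=
        le_sum_mul_of_forall_le hp0 hp1 fun i =>
          add_le_add (mul_le_mul_of_nonneg_left (hL i) (by linarith))
            (mul_le_mul_of_nonpos_left (hv i) (by linarith))
    _ = ∑ i, p i * v i - ∑ i, β * p i * w i := by
        rw [← sum_sub_distrib]
        exact sum_congr rfl fun i _ => by ring
    _ ≤ ∑ i, p i * v i - ∑ i, q i * w i :=
        sub_le_sub_left (sum_le_sum fun i _ => mul_le_mul_of_nonneg_right (hq i) (hw i)) _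

end WeightedSums

section BellmanError

variable [Fintype S] [Fintype A] {P Pb : S → A → S → ℝ} {r pie : S → A → ℝ}

def fqeValue (Pb : S → A → S → ℝ) (r pie : S → A → ℝ) (k : ℕ) (s : S) : ℝ :=
  ∑ a, pie s a * fqeAux Pb r pie k s a

lemma Vaux_le (hP0 : ∀ s a s', 0 ≤ P s a s') (hP1 : ∀ s a, ∑ s', P s a s' = 1)
    (hr1 : ∀ s a, r s a ≤ 1) (hpie0 : ∀ s a, 0 ≤ pie s a) (hpie1 : ∀ s, ∑ a, pie s a = 1) :
    ∀ k s, Vaux P r pie k s ≤ k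
  | 0, _ => by simp [Vaux]
  | k + 1, s => by
    rw [Nat.cast_succ, add_comm (k : ℝ)]
    refine sum_mul_le_of_forall_le (hpie0 s) (hpie1 s) fun a => ?_
    exact add_le_add (hr1 s a) (sum_mul_le_of_forall_le (hP0 s a) (hP1 s a)
      fun s' => Vaux_le hP0 hP1 hr1 hpie0 hpie1 k s')

lemma fqeValue_nonneg (hPb0 : ∀ s a s', 0 ≤ Pb s a s') (hr0 : ∀ s a, 0 ≤ r s a)
    (hpie0 : ∀ s a, 0 ≤ pie s a) : ∀ k s, 0 ≤ fqeValue Pb r pie k s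
  | 0, _ => by simp [fqeValue, fqeAux]
  | k + 1, s => sum_nonneg fun a _ => mul_nonneg (hpie0 s a) <|
      add_nonneg (hr0 s a) <| sum_nonneg fun s' _ =>
        mul_nonneg (hPb0 s a s') (fqeValue_nonneg hPb0 hr0 hpie0 k s')

lemma Vaux_sub_fqeValue_succ (k : ℕ) (s : S) :
    Vaux P r pie (k + 1) s - fqeValue Pb r pie (k + 1) s =
      ∑ a, pie s a * (∑ s', P s a s' * Vaux P r pie k s' -
        ∑ s', Pb s a s' * fqeValue Pb r pie k s') := by
  simp only [Vaux, fqeValue, fqeAux]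
  rw [← sum_sub_distrib]
  exact sum_congr rfl fun a _ => by ring

theorem Vaux_sub_fqeValue_bounds {α β : ℝ} {lo hi : ℕ → ℝ}
    (hα0 : 0 ≤ α) (hα1 : α ≤ 1) (hβ : 1 ≤ β)
    (hP0 : ∀ s a s', 0 ≤ P s a s') (hP1 : ∀ s a, ∑ s', P s a s' = 1)
    (hPb_ge : ∀ s a s', α * P s a s' ≤ Pb s a s') (hPb_le : ∀ s a s', Pb s a s' ≤ β * P s a s')
    (hr0 : ∀ s a, 0 ≤ r s a) (hr1 : ∀ s a, r s a ≤ 1)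
    (hpie0 : ∀ s a, 0 ≤ pie s a) (hpie1 : ∀ s, ∑ a, pie s a = 1)
    (hlo0 : lo 0 ≤ 0) (hlo : ∀ k : ℕ, lo (k + 1) ≤ β * lo k + (1 - β) * k)
    (hhi0 : 0 ≤ hi 0) (hhi : ∀ k : ℕ, α * hi k + (1 - α) * k ≤ hi (k + 1)) :
    ∀ k s, lo k ≤ Vaux P r pie k s - fqeValue Pb r pie k s ∧
      Vaux P r pie k s - fqeValue Pb r pie k s ≤ hi k := by
  have hPb0 s a s' : 0 ≤ Pb s a s' := (mul_nonneg hα0 (hP0 s a s')).trans (hPb_ge s a s')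
  have hW := fqeValue_nonneg hPb0 hr0 hpie0
  have hV := Vaux_le hP0 hP1 hr1 hpie0 hpie1
  intro k
  induction k with
  | zero => simpa [Vaux, fqeValue, fqeAux] using fun _ => ⟨hlo0, hhi0⟩
  | succ k ih =>
    intro s
    rw [Vaux_sub_fqeValue_succ]
    constructor
    · refine (hlo k).trans (le_sum_mul_of_forall_le (hpie0 s) (hpie1 s) fun a => ?_)
      exact le_sum_mul_sub_sum_mul hβ (hP0 s a) (hP1 s a) (hPb_le s a) (hW k) (hV k)
        fun s' => (ih s').1
    · refine (sum_mul_le_of_forall_le (hpie0 s) (hpie1 s) fun a => ?_).trans (hhi k)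
      exact sum_mul_sub_sum_mul_le hα0 hα1 (hP0 s a) (hP1 s a) (hPb_ge s a) (hW k) (hV k)
        fun s' => (ih s').2

end BellmanError

section SensitivityBounds

variable {ε : ℝ}

lemma sensitivity_lower_succ (hε : ε ≠ 0) (k : ℕ) :
    (1 + ε * ↑(k + 1) - (1 + ε) ^ (k + 1)) / ε =
      (1 + ε) * ((1 + ε * k - (1 + ε) ^ k) / ε) + (1 - (1 + ε)) * k := by
  push_cast
  field_simp
  ring

lemma sensitivity_upper_succ (hε : 0 < ε) (k : ℕ) :
    (1 + ε)⁻¹ * ((((1 + ε) ^ k)⁻¹ - (1 - ε * k)) / ε) + (1 - (1 + ε)⁻¹) * k ≤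
      (((1 + ε) ^ (k + 1))⁻¹ - (1 - ε * ↑(k + 1))) / ε := by
  have hε1 : 0 < 1 + ε := by linarith
  have hslack : (((1 + ε) ^ (k + 1))⁻¹ - (1 - ε * ↑(k + 1))) / ε -
      ((1 + ε)⁻¹ * ((((1 + ε) ^ k)⁻¹ - (1 - ε * k)) / ε) + (1 - (1 + ε)⁻¹) * k) =
      ε / (1 + ε) := by
    push_cast
    field_simp
    ring
  linarith [div_pos hε hε1]

end SensitivityBounds

section ConfoundedKernel

variable [Fintype U] {Pu : S → U → ℝ} {pib : S → U → A → ℝ} {T : S → U → A → S → ℝ}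

lemma margKer_nonneg (hPu0 : ∀ s u, 0 ≤ Pu s u) (hT0 : ∀ s u a s', 0 ≤ T s u a s')
    (s : S) (a : A) (s' : S) : 0 ≤ margKer Pu T s a s' :=
  sum_nonneg fun u _ => mul_nonneg (hPu0 s u) (hT0 s u a s')

lemma sum_margKer [Fintype S] (hPu1 : ∀ s, ∑ u, Pu s u = 1)
    (hT1 : ∀ s u a, ∑ s', T s u a s' = 1) (s : S) (a : A) :
    ∑ s', margKer Pu T s a s' = 1 := by
  simp only [margKer]
  rw [sum_comm]
  simp only [← mul_sum, hT1, mul_one, hPu1]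

lemma mul_margKer_le_confKer {α : ℝ} (hPu0 : ∀ s u, 0 ≤ Pu s u)
    (hT0 : ∀ s u a s', 0 ≤ T s u a s') {s : S} {a : A}
    (hα : ∀ u, α ≤ pib s u a / piMarg Pu pib s a) (s' : S) :
    α * margKer Pu T s a s' ≤ confKer Pu pib T s a s' := by
  rw [margKer, confKer, mul_sum]
  refine sum_le_sum fun u _ => ?_
  nlinarith [mul_le_mul_of_nonneg_right (hα u) (mul_nonneg (hPu0 s u) (hT0 s u a s'))]

lemma confKer_le_mul_margKer {β : ℝ} (hPu0 : ∀ s u, 0 ≤ Pu s u)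
    (hT0 : ∀ s u a s', 0 ≤ T s u a s') {s : S} {a : A}
    (hβ : ∀ u, pib s u a / piMarg Pu pib s a ≤ β) (s' : S) :
    confKer Pu pib T s a s' ≤ β * margKer Pu T s a s' := by
  rw [margKer, confKer, mul_sum]
  refine sum_le_sum fun u _ => ?_
  nlinarith [mul_le_mul_of_nonneg_right (hβ u) (mul_nonneg (hPu0 s u) (hT0 s u a s'))]

end ConfoundedKernel

theorem fqe_error_bounds_sensitivity_general
    [Fintype S] [Fintype U] [Fintype A]
    (H : ℕ)
    (Pu : S → U → ℝ) (hPu0 : ∀ s u, 0 ≤ Pu s u) (hPu1 : ∀ s, ∑ u, Pu s u = 1)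
    (T : S → U → A → S → ℝ) (hT0 : ∀ s u a s', 0 ≤ T s u a s')
    (hT1 : ∀ s u a, ∑ s', T s u a s' = 1)
    (r : S → A → ℝ) (hr0 : ∀ s a, 0 ≤ r s a) (hr1 : ∀ s a, r s a ≤ 1)
    (pib : S → U → A → ℝ)
    (pie : S → A → ℝ) (hpie0 : ∀ s a, 0 ≤ pie s a) (hpie1 : ∀ s, ∑ a, pie s a = 1)
    (ε : ℝ) (hε : 0 < ε)
    (hsens : ∀ s u a, 1 / (1 + ε) ≤ piMarg Pu pib s a / pib s u a ∧
      piMarg Pu pib s a / pib s u a ≤ 1 + ε) :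
    ∀ s : S,
      (1 + ε * H - (1 + ε) ^ H) / ε ≤
          Vaux (margKer Pu T) r pie H s -
            ∑ a, pie s a * fqeAux (confKer Pu pib T) r pie H s a ∧
        Vaux (margKer Pu T) r pie H s -
            ∑ a, pie s a * fqeAux (confKer Pu pib T) r pie H s a ≤
          (((1 + ε) ^ H)⁻¹ - (1 - ε * H)) / ε := by
  have hε1 : 0 < 1 + ε := by linarith
  have hratio s u a : (1 + ε)⁻¹ ≤ pib s u a / piMarg Pu pib s a ∧
      pib s u a / piMarg Pu pib s a ≤ 1 + ε := by
    obtain ⟨hge, hle⟩ := hsens s u a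
    rw [one_div] at hge
    have hpos := (inv_pos.2 hε1).trans_le hge
    rw [← inv_div]
    exact ⟨inv_anti₀ hpos hle, (inv_le_comm₀ hpos hε1).2 hge⟩
  exact Vaux_sub_fqeValue_bounds (lo := fun k : ℕ => (1 + ε * k - (1 + ε) ^ k) / ε)
    (hi := fun k : ℕ => (((1 + ε) ^ k)⁻¹ - (1 - ε * k)) / ε)
    (inv_nonneg.2 hε1.le) (inv_le_one_of_one_le₀ (by linarith)) (by linarith) (margKer_nonneg hPu0 hT0) (sum_margKer hPu1 hT1)
    (fun s a => mul_margKer_le_confKer hPu0 hT0 fun u => (hratio s u a).1)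
    (fun s a => confKer_le_mul_margKer hPu0 hT0 fun u => (hratio s u a).2)
    hr0 hr1 hpie0 hpie1 (by simp) (fun k => (sensitivity_lower_succ hε.ne' k).le)
    (by simp) (sensitivity_upper_succ hε) H

/-- Infinite-data FQE error bounds under the sensitivity model
`1/(1+ε) ≤ π_b(a|s)/π_b(a|s,u) ≤ 1+ε`:
`(1 + εH − (1+ε)^H)/ε ≤ V_1(s) − Σ_a π_e(a|s) f̂_1(s,a) ≤ ((1+ε)^{−H} − (1 − εH))/ε`. -/
theorem fqe_error_bounds_sensitivity
    [Fintype S] [Fintype U] [Fintype A] [Nonempty S] [Nonempty U] [Nonempty A]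
    (H : ℕ) (hH : 1 ≤ H)
    (Pu : S → U → ℝ) (hPu0 : ∀ s u, 0 ≤ Pu s u) (hPu1 : ∀ s, ∑ u, Pu s u = 1)
    (T : S → U → A → S → ℝ) (hT0 : ∀ s u a s', 0 ≤ T s u a s')
    (hT1 : ∀ s u a, ∑ s', T s u a s' = 1)
    (r : S → A → ℝ) (hr0 : ∀ s a, 0 ≤ r s a) (hr1 : ∀ s a, r s a ≤ 1)
    (pib : S → U → A → ℝ) (hpib0 : ∀ s u a, 0 < pib s u a)
    (hpib1 : ∀ s u, ∑ a, pib s u a = 1)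
    (pie : S → A → ℝ) (hpie0 : ∀ s a, 0 ≤ pie s a) (hpie1 : ∀ s, ∑ a, pie s a = 1)
    (ε : ℝ) (hε : 0 < ε)
    (hsens : ∀ s u a, 1 / (1 + ε) ≤ piMarg Pu pib s a / pib s u a ∧
      piMarg Pu pib s a / pib s u a ≤ 1 + ε) :
    ∀ s : S,
      (1 + ε * H - (1 + ε) ^ H) / ε ≤
          Vaux (margKer Pu T) r pie H s -
            ∑ a, pie s a * fqeAux (confKer Pu pib T) r pie H s a ∧
        Vaux (margKer Pu T) r pie H s -
            ∑ a, pie s a * fqeAux (confKer Pu pib T) r pie H s a ≤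
          (((1 + ε) ^ H)⁻¹ - (1 - ε * H)) / ε :=
  fqe_error_bounds_sensitivity_general H Pu hPu0 hPu1 T hT0 hT1 r hr0 hr1 pib pie hpie0 hpie1 ε hε
    hsens
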